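/- Let f(z) ∈ ℤ[[z]] be a formal power series all of whose coefficients are nonnegative, and let r ≥ 1 be an integer. Then all coefficients of W_f^{(r)}(z) and all coefficients of (−1)^r · W_{−f}^{(r)}(z) are nonnegative integers; that is, m_f(j, r) ≥ 0 and (−1)^r m_{−f}(j, r) ≥ 0 are integers for all j ≥ 0. -/

import Mathlib

/-- Substitution of `z^d` into a formal power series: `expandPS d f = f(z^d)`. -/
noncomputable def expandPS (d : ℕ) (f : PowerSeries ℚ) : PowerSeries ℚ :=
  PowerSeries.mk fun j => if d ∣ j then PowerSeries.coeff (j / d) f else 0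

/-- The Witt transform `W_f^{(r)}(z) = (1/r) ∑_{d ∣ r} μ(d) f(z^d)^{r/d}`;
its `j`-th coefficient is `m_f(j, r)`. -/
noncomputable def witt (f : PowerSeries ℚ) (r : ℕ) : PowerSeries ℚ :=
  (1 / (r : ℚ)) • ∑ d ∈ r.divisors,
    ((ArithmeticFunction.moebius d : ℤ) : ℚ) • (expandPS d f) ^ (r / d)

/-!
Write `a i` for the coefficients of `f` and take an alphabet with `a i` letters of weight `i`.
Then the `j`-th coefficient of `f(z^d)^{r/d}` counts the words of length `r` and weight `j` that are
invariant under rotation by `r/d`, i.e. whose minimal rotation period divides `r/d`. Möbius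
inversion over the divisors of `r` turns `r · m_f(j, r)` into the number of such words of minimal
period exactly `r`, and these fall into rotation orbits of size `r`.

For `-f` the sign `(-1)^{r + r/d}` differs from `1` only when `r` is even and `r/d` odd; as
`μ d` vanishes when `4 ∣ d`, this gives
`(-1)^r W_{-f}^{(r)} = W_f^{(r)} + [r ≡ 2 mod 4] W_f^{(r/2)}(z^2)`.
-/

open Finset Function ArithmeticFunction PowerSeries
open scoped ArithmeticFunction.Moebius

namespace Function

variable {α : Type*} [DecidableEq α] (σ : α → α) (s : Finset α)

theorem card_filter_isPeriodicPt_eq_sum_divisors {n : ℕ} (hn : n ≠ 0) :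
    #{x ∈ s | IsPeriodicPt σ n x} =
      ∑ p ∈ n.divisors, #{x ∈ s | minimalPeriod σ x = p} := by
  rw [card_eq_sum_card_fiberwise (f := minimalPeriod σ) (t := n.divisors)
    fun x hx => Nat.mem_divisors.2 ⟨(mem_filter.1 hx).2.minimalPeriod_dvd, hn⟩]
  refine sum_congr rfl fun p hp => congrArg card ?_
  rw [filter_filter]
  exact filter_congr fun x _ =>
    ⟨fun h => h.2,
      fun h => ⟨isPeriodicPt_iff_minimalPeriod_dvd.2 (h ▸ Nat.dvd_of_mem_divisors hp), h⟩⟩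

theorem sum_moebius_mul_card_filter_isPeriodicPt {n : ℕ} (hn : 0 < n) :
    ∑ d ∈ n.divisors, (μ d : ℤ) * #{x ∈ s | IsPeriodicPt σ (n / d) x} =
      #{x ∈ s | minimalPeriod σ x = n} := by
  rw [← Nat.sum_divisorsAntidiagonal fun d e => (μ d : ℤ) * #{x ∈ s | IsPeriodicPt σ e x}]
  have inversion := (sum_eq_iff_sum_mul_moebius_eq (R := ℤ)
    (f := fun p => #{x ∈ s | minimalPeriod σ x = p})
    (g := fun e => #{x ∈ s | IsPeriodicPt σ e x})).1
    (fun m hm => by exact_mod_cast (card_filter_isPeriodicPt_eq_sum_divisors σ s hm.ne').symm) n hn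
  simpa only [Int.cast_id] using inversion

theorem card_toFinset_periodicOrbit (x : α) :
    #(periodicOrbit σ x).toFinset = minimalPeriod σ x := by
  have hnodup := nodup_periodicOrbit (f := σ) (x := x)
  rw [periodicOrbit_def, Cycle.nodup_coe_iff] at hnodup
  rw [periodicOrbit_def, Cycle.coe_toFinset, List.toFinset_card_of_nodup hnodup,
    List.length_map, List.length_range]

theorem mem_toFinset_periodicOrbit {x y : α} (hx : x ∈ periodicPts σ) :
    y ∈ (periodicOrbit σ x).toFinset ↔ ∃ k, σ^[k] x = y := by
  rw [← mem_periodicOrbit_iff hx, periodicOrbit_def, Cycle.coe_toFinset, List.mem_toFinset,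
    Cycle.mem_coe_iff]

/-- Points of minimal period `n` fall into orbits of size `n`. -/
theorem dvd_card_filter_minimalPeriod_eq (hs : Set.MapsTo σ s s) {n : ℕ} (hn : n ≠ 0) :
    n ∣ #{x ∈ s | minimalPeriod σ x = n} := by
  set T := s.filter (minimalPeriod σ · = n)
  let orbit (x : α) : Finset α := (periodicOrbit σ x).toFinset
  have periodic {x} (hx : x ∈ T) : x ∈ periodicPts σ :=
    minimalPeriod_pos_iff_mem_periodicPts.1 ((mem_filter.1 hx).2 ▸ Nat.pos_of_ne_zero hn)
  have fiber {x} (hx : x ∈ T) : {y ∈ T | orbit y = orbit x} = orbit x := by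
    ext y
    rw [mem_filter, mem_toFinset_periodicOrbit σ (periodic hx)]
    constructor
    · rintro ⟨hy, hxy⟩
      have hy_orbit : y ∈ orbit y := (mem_toFinset_periodicOrbit σ (periodic hy)).2 ⟨0, rfl⟩
      rw [hxy] at hy_orbit
      exact (mem_toFinset_periodicOrbit σ (periodic hx)).1 hy_orbit
    · rintro ⟨k, rfl⟩
      obtain ⟨hxs, hxn⟩ := mem_filter.1 hx
      refine ⟨mem_filter.2 ⟨hs.iterate k hxs, ?_⟩, ?_⟩
      · rw [minimalPeriod_apply_iterate (periodic hx), hxn]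
      · simp only [orbit, periodicOrbit_apply_iterate_eq (periodic hx)]
  rw [card_eq_sum_card_fiberwise fun x hx => mem_image_of_mem orbit hx,
    sum_const_nat fun O hO => ?_]
  · exact dvd_mul_left n _
  obtain ⟨x, hx, rfl⟩ := mem_image.1 hO
  rw [fiber hx, card_toFinset_periodicOrbit, (mem_filter.1 hx).2]

end Function

section Words

variable {L : Type*} (ω : L → ℕ)

def wordWeight {ι : Type*} [Fintype ι] (w : ι → L) : ℕ := ∑ x, ω (w x)

variable {r : ℕ}

def cyclicShift (w : ZMod r → L) : ZMod r → L := fun x => w (x + 1)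

theorem iterate_cyclicShift_apply (k : ℕ) (w : ZMod r → L) (x : ZMod r) :
    cyclicShift^[k] w x = w (x + k) := by
  induction k generalizing w with
  | zero => simp
  | succ k ih =>
    rw [iterate_succ_apply, ih, cyclicShift, Nat.cast_succ, add_assoc, add_comm (k : ZMod r)]

theorem isPeriodicPt_cyclicShift_iff {e : ℕ} {w : ZMod r → L} :
    IsPeriodicPt cyclicShift e w ↔ ∀ x, w (x + e) = w x := by
  simp only [IsPeriodicPt, IsFixedPt, funext_iff, iterate_cyclicShift_apply]

theorem wordWeight_cyclicShift [NeZero r] (w : ZMod r → L) :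
    wordWeight ω (cyclicShift w) = wordWeight ω w :=
  Fintype.sum_equiv (Equiv.addRight 1) _ _ fun _ => rfl

variable {e : ℕ} [NeZero r]

theorem card_fiber_castHom [NeZero e] (he : e ∣ r) (y : ZMod e) :
    #{x : ZMod r | ZMod.castHom he (ZMod e) x = y} = r / e := by
  have surj := ZMod.castHom_surjective he
  have fiber_eq (y : ZMod e) : #{x : ZMod r | ZMod.castHom he (ZMod e) x = y} =
      #{x : ZMod r | ZMod.castHom he (ZMod e) x = 0} :=
    AddMonoidHom.card_fiber_eq_of_mem_range (ZMod.castHom he (ZMod e)).toAddMonoidHom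
      (surj y) (surj 0)
  have hr : r = e * #{x : ZMod r | ZMod.castHom he (ZMod e) x = 0} := by
    conv_lhs => rw [← ZMod.card r, ← card_univ]
    rw [card_eq_sum_card_fiberwise (f := ZMod.castHom he (ZMod e)) (t := univ)
        fun _ _ => mem_univ _,
      sum_congr rfl fun y _ => fiber_eq y, sum_const, card_univ, ZMod.card, smul_eq_mul]
  rw [fiber_eq, eq_comm]
  exact Nat.div_eq_of_eq_mul_right (Nat.pos_of_ne_zero (NeZero.ne e)) hr

theorem wordWeight_comp_castHom [NeZero e] (he : e ∣ r) (v : ZMod e → L) :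
    wordWeight ω (v ∘ ZMod.castHom he (ZMod e)) = r / e * wordWeight ω v := by
  rw [wordWeight, wordWeight, mul_sum, ← sum_fiberwise univ (ZMod.castHom he (ZMod e))]
  refine sum_congr rfl fun y _ => ?_
  rw [sum_congr rfl fun x hx => by rw [comp_apply, (mem_filter.1 hx).2], sum_const,
    card_fiber_castHom, smul_eq_mul]

theorem isPeriodicPt_cyclicShift_iff_exists_comp (he : e ∣ r) {w : ZMod r → L} :
    IsPeriodicPt cyclicShift e w ↔ ∃ v : ZMod e → L, v ∘ ZMod.castHom he (ZMod e) = w := by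
  rw [isPeriodicPt_cyclicShift_iff]
  constructor
  · intro hw
    have periodic (k : ℕ) (x : ZMod r) : w (x + (e * k : ℕ)) = w x := by
      induction k with
      | zero => simp
      | succ k ih => rw [Nat.mul_succ, Nat.cast_add, ← add_assoc, hw, ih]
    refine ⟨fun y => w (y.val : ZMod r), funext fun x => ?_⟩
    rw [comp_apply, ZMod.castHom_apply, ZMod.cast_eq_val, ZMod.val_natCast,
      ← periodic (x.val / e), ← Nat.cast_add, Nat.mod_add_div, ZMod.natCast_zmod_val]
  · rintro ⟨v, rfl⟩ x
    simp only [comp_apply, map_add, map_natCast, ZMod.natCast_self, add_zero]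

theorem card_isPeriodicPt_cyclicShift [NeZero e] [Fintype L] [DecidableEq L] (he : e ∣ r)
    (j : ℕ) :
    #{w : ZMod r → L | wordWeight ω w = j ∧ IsPeriodicPt cyclicShift e w} =
      #{v : ZMod e → L | r / e * wordWeight ω v = j} := by
  have inj : Injective fun v : ZMod e → L => v ∘ ZMod.castHom he (ZMod e) :=
    (ZMod.castHom_surjective he).injective_comp_right
  rw [← card_image_of_injective _ inj]
  congr 1
  ext w
  simp only [mem_filter, mem_univ, true_and, mem_image,
    isPeriodicPt_cyclicShift_iff_exists_comp he]
  constructor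
  · rintro ⟨hw, v, rfl⟩
    exact ⟨v, by rwa [← wordWeight_comp_castHom], rfl⟩
  · rintro ⟨v, hv, rfl⟩
    exact ⟨by rwa [wordWeight_comp_castHom], v, rfl⟩

end Words

section Series

variable {R : Type*} [CommSemiring R]

theorem coeff_pow_sum_X_pow {L : Type*} [Fintype L] (ω : L → ℕ) (ι : Type*) [Fintype ι]
    [DecidableEq ι] (i : ℕ) :
    coeff i ((∑ l, (X : R⟦X⟧) ^ ω l) ^ Fintype.card ι) =
      #{v : ι → L | wordWeight ω v = i} := by
  rw [← card_univ, ← prod_const, prod_univ_sum, Fintype.piFinset_univ, map_sum, card_filter]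
  push_cast
  refine sum_congr rfl fun v _ => ?_
  rw [prod_pow_eq_pow_sum, coeff_X_pow, wordWeight]
  exact if_congr eq_comm rfl rfl

theorem trunc_eq_sum_X_pow {f : R⟦X⟧} {a : ℕ → ℕ} (hf : ∀ n, coeff n f = a n)
    (N : ℕ) :
    (trunc N f : R⟦X⟧) = ∑ l : Σ i : Fin N, Fin (a i), X ^ (l.1 : ℕ) := by
  ext n
  rw [Polynomial.coeff_coe, coeff_trunc, Fintype.sum_sigma, map_sum]
  simp only [sum_const, card_univ, Fintype.card_fin, map_nsmul, coeff_X_pow, smul_ite,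
    smul_zero, nsmul_one]
  rw [Fin.sum_univ_eq_sum_range (fun i => if n = i then (a i : R) else 0), sum_ite_eq, hf]
  exact if_congr mem_range.symm rfl rfl

/-- Letters of weight above `j` cannot occur in a word of weight `i ≤ j`. -/
theorem coeff_pow_eq_card_words {f : R⟦X⟧} {a : ℕ → ℕ} (hf : ∀ n, coeff n f = a n)
    (ι : Type*) [Fintype ι] [DecidableEq ι] {i j : ℕ} (hij : i ≤ j) :
    coeff i (f ^ Fintype.card ι) =
      #{v : ι → Σ k : Fin (j + 1), Fin (a k) | wordWeight (fun l => (l.1 : ℕ)) v = i} := by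
  rw [← coeff_coe_trunc_of_lt (Nat.lt_succ_of_le hij), ← trunc_trunc_pow,
    coeff_coe_trunc_of_lt (Nat.lt_succ_of_le hij), trunc_eq_sum_X_pow hf, coeff_pow_sum_X_pow]

end Series

theorem ArithmeticFunction.moebius_two_mul (d : ℕ) :
    μ (2 * d) = if Even d then 0 else -μ d := by
  split_ifs with hd
  · refine moebius_eq_zero_of_not_squarefree fun hsq => ?_
    obtain ⟨k, rfl⟩ := hd
    exact Nat.isUnit_iff.not.2 (by norm_num) (hsq 2 ⟨k, by ring⟩)
  · rw [isMultiplicative_moebius.map_mul_of_coprime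
      (Nat.coprime_two_left.2 (Nat.not_even_iff_odd.1 hd)), moebius_apply_prime Nat.prime_two,
      neg_one_mul]

theorem sum_divisors_filter_odd_div_two_mul {M : Type*} [AddCommMonoid M] (F : ℕ → M)
    (s : ℕ) :
    ∑ d ∈ (2 * s).divisors with Odd (2 * s / d), F d =
      ∑ d ∈ s.divisors with Odd (s / d), F (2 * d) := by
  rw [← sum_image (g := (2 * ·)) fun _ _ _ _ h => Nat.eq_of_mul_eq_mul_left two_pos h]
  congr 1
  ext d
  simp only [mem_filter, Nat.mem_divisors, mem_image]
  constructor
  · rintro ⟨⟨⟨q, hq⟩, hs⟩, hodd⟩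
    have hd : 0 < d := Nat.pos_of_ne_zero fun h => hs (by rw [hq, h, zero_mul])
    rw [hq, Nat.mul_div_cancel_left _ hd] at hodd
    obtain ⟨d', rfl⟩ : 2 ∣ d :=
      ((Nat.prime_two.dvd_mul).1 (hq ▸ dvd_mul_right 2 s)).resolve_right
        (Nat.not_even_iff_odd.2 hodd ∘ even_iff_two_dvd.2)
    have hs' : s = d' * q := by linarith
    refine ⟨d', ⟨⟨⟨q, hs'⟩, by omega⟩, ?_⟩, rfl⟩
    rwa [hs', Nat.mul_div_cancel_left _ (by omega)]
  · rintro ⟨d', ⟨⟨⟨q, hq⟩, hs⟩, hodd⟩, rfl⟩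
    refine ⟨⟨⟨q, by rw [hq, mul_assoc]⟩, by omega⟩, ?_⟩
    rwa [Nat.mul_div_mul_left _ _ two_pos]

theorem sum_moebius_mul_neg_one_pow_smul {M : Type*} [AddCommGroup M] (G : ℕ → M) (r : ℕ) :
    ∑ d ∈ r.divisors, (μ d * (-1) ^ (r + r / d)) • G d =
      ∑ d ∈ r.divisors, μ d • G d +
        if r % 4 = 2 then 2 • ∑ d ∈ (r / 2).divisors, μ d • G (2 * d) else 0 := by
  rcases Nat.even_or_odd' r with ⟨s, rfl | rfl⟩
  · have term (d : ℕ) : (μ d * (-1) ^ (2 * s + 2 * s / d)) • G d =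
        μ d • G d - 2 • if Odd (2 * s / d) then μ d • G d else 0 := by
      rw [pow_add, pow_mul, neg_one_sq, one_pow, one_mul]
      split_ifs with h
      · rw [h.neg_one_pow, mul_neg_one, neg_smul, two_smul]
        abel
      · rw [(Nat.not_odd_iff_even.1 h).neg_one_pow, mul_one, smul_zero, sub_zero]
    rw [sum_congr rfl fun d _ => term d, sum_sub_distrib, ← smul_sum, ← sum_filter,
      sum_divisors_filter_odd_div_two_mul (fun d => μ d • G d),
      Nat.mul_div_cancel_left s two_pos]
    rcases Nat.even_or_odd s with hs | hs
    · have vanish : ∑ d ∈ s.divisors with Odd (s / d), μ (2 * d) • G (2 * d) = 0 := by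
        refine sum_eq_zero fun d hd => ?_
        obtain ⟨hd, hodd⟩ := mem_filter.1 hd
        have hd_even : Even d := by
          by_contra hne
          rw [Nat.not_even_iff_odd] at hne
          exact Nat.not_even_iff_odd.2
            (Nat.div_mul_cancel (Nat.dvd_of_mem_divisors hd) ▸ hodd.mul hne) hs
        rw [moebius_two_mul, if_pos hd_even, zero_smul]
      rw [if_neg (by obtain ⟨k, rfl⟩ := hs; omega), vanish, smul_zero, sub_zero, add_zero]
    · have flip : ∑ d ∈ s.divisors with Odd (s / d), μ (2 * d) • G (2 * d) =
          -∑ d ∈ s.divisors, μ d • G (2 * d) := by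
        rw [filter_true_of_mem fun d hd =>
          hs.of_dvd_nat (Nat.div_dvd_of_dvd (Nat.dvd_of_mem_divisors hd)), ← sum_neg_distrib]
        refine sum_congr rfl fun d hd => ?_
        rw [moebius_two_mul, if_neg (Nat.not_even_iff_odd.2
          (hs.of_dvd_nat (Nat.dvd_of_mem_divisors hd))), neg_smul]
      rw [if_pos (by obtain ⟨k, rfl⟩ := hs; omega), flip, smul_neg, sub_neg_eq_add]
  · rw [if_neg (by omega), add_zero]
    refine sum_congr rfl fun d hd => ?_
    have hodd : Odd (2 * s + 1) := odd_two_mul_add_one s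
    rw [Even.neg_one_pow (hodd.add_odd (hodd.of_dvd_nat (Nat.div_dvd_of_dvd
      (Nat.dvd_of_mem_divisors hd)))), mul_one]

def HasNatCoeffs (f : ℚ⟦X⟧) : Prop := ∀ j, ∃ n : ℕ, coeff j f = n

theorem HasNatCoeffs.add {f g : ℚ⟦X⟧} (hf : HasNatCoeffs f) (hg : HasNatCoeffs g) :
    HasNatCoeffs (f + g) := fun j => by
  obtain ⟨m, hm⟩ := hf j
  obtain ⟨n, hn⟩ := hg j
  exact ⟨m + n, by rw [map_add, hm, hn, Nat.cast_add]⟩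

theorem HasNatCoeffs.expand {f : ℚ⟦X⟧} (hf : HasNatCoeffs f) (p : ℕ) (hp : p ≠ 0) :
    HasNatCoeffs (expand p hp f) := fun j => by
  rw [coeff_expand]
  split_ifs
  exacts [hf _, ⟨0, Nat.cast_zero.symm⟩]

theorem expandPS_eq_expand {d : ℕ} (hd : d ≠ 0) (f : ℚ⟦X⟧) :
    expandPS d f = expand d hd f := by
  ext n
  rw [expandPS, coeff_mk, coeff_expand]

theorem expandPS_neg (d : ℕ) (f : ℚ⟦X⟧) : expandPS d (-f) = -expandPS d f := by
  ext n
  simp only [expandPS, coeff_mk, map_neg]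
  split_ifs <;> simp

theorem expand_expandPS {p d : ℕ} (hp : p ≠ 0) (hd : d ≠ 0) (f : ℚ⟦X⟧) :
    expand p hp (expandPS d f) = expandPS (p * d) f := by
  rw [expandPS_eq_expand hd, expandPS_eq_expand (mul_ne_zero hp hd), expand_mul]

theorem coeff_witt (f : ℚ⟦X⟧) (r j : ℕ) :
    coeff j (witt f r) =
      1 / r * ∑ d ∈ r.divisors, (μ d : ℚ) * coeff j (expandPS d f ^ (r / d)) := by
  simp only [witt, coeff_smul, map_sum, smul_eq_mul]

theorem coeff_expandPS_pow_eq_card {f : ℚ⟦X⟧} {a : ℕ → ℕ} (hf : ∀ n, coeff n f = a n)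
    {r d : ℕ} [NeZero r] (hd : d ∣ r) (j : ℕ) :
    coeff j (expandPS d f ^ (r / d)) = #{w : ZMod r → Σ i : Fin (j + 1), Fin (a i) |
      wordWeight (fun l => (l.1 : ℕ)) w = j ∧ IsPeriodicPt cyclicShift (r / d) w} := by
  obtain ⟨e, rfl⟩ := hd
  have hd0 : d ≠ 0 := left_ne_zero_of_mul (NeZero.ne (d * e))
  have : NeZero e := ⟨right_ne_zero_of_mul (NeZero.ne (d * e))⟩
  rw [Nat.mul_div_cancel_left _ (Nat.pos_of_ne_zero hd0),
    card_isPeriodicPt_cyclicShift _ (Dvd.intro_left d rfl),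
    Nat.mul_div_cancel _ (Nat.pos_of_ne_zero (NeZero.ne e)), expandPS_eq_expand hd0, ← map_pow,
    coeff_expand]
  split_ifs with hdj
  · obtain ⟨i, rfl⟩ := hdj
    have words := coeff_pow_eq_card_words hf (ZMod e)
      (Nat.le_mul_of_pos_left i (Nat.pos_of_ne_zero hd0))
    rw [ZMod.card] at words
    rw [Nat.mul_div_cancel_left _ (Nat.pos_of_ne_zero hd0), words]
    simp only [Nat.mul_left_cancel_iff (Nat.pos_of_ne_zero hd0)]
  · rw [eq_comm, Nat.cast_eq_zero, card_eq_zero, filter_eq_empty_iff]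
    exact fun v _ hv => hdj ⟨_, hv.symm⟩

theorem hasNatCoeffs_witt {f : ℚ⟦X⟧} (hf : HasNatCoeffs f) {r : ℕ} (hr : r ≠ 0) :
    HasNatCoeffs (witt f r) := by
  intro j
  choose a ha using hf
  have : NeZero r := ⟨hr⟩
  set s : Finset (ZMod r → Σ i : Fin (j + 1), Fin (a i)) :=
    {w | wordWeight (fun l => (l.1 : ℕ)) w = j}
  have hs : Set.MapsTo cyclicShift (s : Set (ZMod r → Σ i : Fin (j + 1), Fin (a i))) s := by
    intro w hw
    rw [mem_coe, mem_filter, wordWeight_cyclicShift] at *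
    exact ⟨mem_univ _, hw.2⟩
  have fixed (d : ℕ) (hd : d ∈ r.divisors) : coeff j (expandPS d f ^ (r / d)) =
      #{w ∈ s | IsPeriodicPt cyclicShift (r / d) w} := by
    rw [coeff_expandPS_pow_eq_card ha (Nat.dvd_of_mem_divisors hd), filter_filter]
  obtain ⟨m, hm⟩ := dvd_card_filter_minimalPeriod_eq cyclicShift s hs hr
  have necklaces := sum_moebius_mul_card_filter_isPeriodicPt cyclicShift s (Nat.pos_of_ne_zero hr)
  refine ⟨m, ?_⟩
  calc coeff j (witt f r)
      = 1 / r * ∑ d ∈ r.divisors,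
          (μ d : ℚ) * #{w ∈ s | IsPeriodicPt cyclicShift (r / d) w} := by
        rw [coeff_witt, sum_congr rfl fun d hd => by rw [fixed d hd]]
    _ = 1 / r * ((r * m : ℕ) : ℚ) := by
        rw [← hm]
        congr 1
        exact_mod_cast necklaces
    _ = m := by
        push_cast
        field_simp

theorem neg_one_pow_smul_witt_neg (f : ℚ⟦X⟧) (r : ℕ) :
    (-1 : ℚ) ^ r • witt (-f) r =
      witt f r + if r % 4 = 2 then expand 2 two_ne_zero (witt f (r / 2)) else 0 := by
  set G : ℕ → ℚ⟦X⟧ := fun d => expandPS d f ^ (r / d)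
  have lhs : (-1 : ℚ) ^ r • witt (-f) r =
      (1 / r : ℚ) • ∑ d ∈ r.divisors, (μ d * (-1) ^ (r + r / d)) • G d := by
    rw [witt, smul_comm, smul_sum]
    congr 1
    refine sum_congr rfl fun d _ => ?_
    rw [← Int.cast_smul_eq_zsmul ℚ, expandPS_neg, neg_pow]
    push_cast
    simp only [G, smul_eq_C_mul, map_mul, map_pow, map_neg, map_one]
    ring
  have witt_eq : witt f r = (1 / r : ℚ) • ∑ d ∈ r.divisors, μ d • G d := by
    simp only [witt, Int.cast_smul_eq_zsmul, G]
  have expand_witt_half (h : r % 4 = 2) : expand 2 two_ne_zero (witt f (r / 2)) =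
      (1 / r : ℚ) • 2 • ∑ d ∈ (r / 2).divisors, μ d • G (2 * d) := by
    have hr2 : ((r / 2 : ℕ) : ℚ) = r / 2 := Nat.cast_div (by omega) two_ne_zero
    rw [witt, map_smul, map_sum, hr2, smul_sum, smul_sum, smul_sum]
    refine sum_congr rfl fun d hd => ?_
    rw [map_smul, map_pow, expand_expandPS two_ne_zero (Nat.pos_of_mem_divisors hd).ne',
      Nat.div_div_eq_div_mul, ← Int.cast_smul_eq_zsmul ℚ, ← Nat.cast_smul_eq_nsmul ℚ,
      smul_smul, smul_smul, smul_smul]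
    congr 1
    field_simp
    push_cast
    ring
  rw [lhs, sum_moebius_mul_neg_one_pow_smul, smul_add, ← witt_eq]
  split_ifs with h
  · rw [expand_witt_half h]
  · rw [smul_zero]

/-- If `f ∈ ℤ[[z]]` has non-negative coefficients and `r ≥ 1`, then all coefficients
of `W_f^{(r)}` and all coefficients of `(-1)^r W_{-f}^{(r)}` are non-negative
integers. -/
theorem witt_coeff_nonneg_int (f : PowerSeries ℚ)
    (hf : ∀ j, ∃ n : ℕ, PowerSeries.coeff j f = n) (r : ℕ) (hr : 1 ≤ r) :
    ∀ j, (∃ n : ℕ, PowerSeries.coeff j (witt f r) = n) ∧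
      (∃ n : ℕ, PowerSeries.coeff j ((-1 : ℚ) ^ r • witt (-f) r) = n) := by
  have hW : HasNatCoeffs (witt f r) := hasNatCoeffs_witt hf (by omega)
  have hW_neg : HasNatCoeffs ((-1 : ℚ) ^ r • witt (-f) r) := by
    rw [neg_one_pow_smul_witt_neg]
    split_ifs
    · exact hW.add ((hasNatCoeffs_witt hf (by omega)).expand 2 two_ne_zero)
    · rwa [add_zero]
  exact fun j => ⟨hW j, hW_neg j⟩
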